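/- For every positive integer p there exists a constant K*(p) > 0, depending only on p, with the following property: for every field with involution F, every eps > 0, every unital *-algebra B over F equipped with a pseudo-rank function N satisfying N(b*) = N(b) for all b in B, every unital *-regular *-subalgebra A of B, and every *-algebra homomorphism rho : M_p(F) -> B (where M_p(F) carries the *-transpose involution) such that for all 1 <= i, j <= p there exists a in A with N(rho(e_ij) - a) < eps (e_ij the canonical matrix units of M_p(F)), there exists a *-algebra homomorphism psi : M_p(F) -> A with N(rho(e_ij) - psi(e_ij)) < K*(p) * eps for all 1 <= i, j <= p. -/

import Mathlib

open scoped TensorProduct Kronecker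

noncomputable section

namespace AraClaramunt

/-! ### Pseudo-rank functions and rank metric notions -/

/-- A pseudo-rank function on a unital ring. -/
structure IsPseudoRankFunction {R : Type*} [Ring R] (N : R → ℝ) : Prop where
  nonneg : ∀ x : R, 0 ≤ N x
  le_one : ∀ x : R, N x ≤ 1
  map_one : N 1 = 1
  subadditive : ∀ a b : R, N (a + b) ≤ N a + N b
  mul_le_left : ∀ a b : R, N (a * b) ≤ N a
  mul_le_right : ∀ a b : R, N (a * b) ≤ N b
  add_of_orthogonal : ∀ e f : R, IsIdempotentElem e → IsIdempotentElem f →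
    e * f = 0 → f * e = 0 → N (e + f) = N e + N f

/-- A rank function is a faithful pseudo-rank function. -/
def IsRankFunction {R : Type*} [Ring R] (N : R → ℝ) : Prop :=
  IsPseudoRankFunction N ∧ ∀ x : R, N x = 0 → x = 0

/-- Cauchy sequence for the pseudo-metric `d(x,y) = N (x - y)`. -/
def RankCauchy {R : Type*} [Ring R] (N : R → ℝ) (u : ℕ → R) : Prop :=
  ∀ ε : ℝ, 0 < ε → ∃ n₀ : ℕ, ∀ m n : ℕ, n₀ ≤ m → n₀ ≤ n → N (u m - u n) < ε

/-- Convergence for the pseudo-metric `d(x,y) = N (x - y)`. -/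
def RankTendsto {R : Type*} [Ring R] (N : R → ℝ) (u : ℕ → R) (x : R) : Prop :=
  ∀ ε : ℝ, 0 < ε → ∃ n₀ : ℕ, ∀ n : ℕ, n₀ ≤ n → N (u n - x) < ε

/-- Completeness with respect to the pseudo-metric `d(x,y) = N (x - y)`. -/
def RankComplete {R : Type*} [Ring R] (N : R → ℝ) : Prop :=
  ∀ u : ℕ → R, RankCauchy N u → ∃ x : R, RankTendsto N u x

/-- Density of a subset with respect to the pseudo-metric `d(x,y) = N (x - y)`. -/
def RankDense {R : Type*} [Ring R] (N : R → ℝ) (S : Set R) : Prop :=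
  ∀ x : R, ∀ ε : ℝ, 0 < ε → ∃ y ∈ S, N (x - y) < ε

/-- von Neumann regularity. -/
def VNRegular (R : Type*) [Ring R] : Prop :=
  ∀ x : R, ∃ y : R, x = x * y * x

/-- A continuous factor: a simple, von Neumann regular, right and left self-injective ring
admitting a rank function whose image is all of `[0,1]`. -/
def IsContinuousFactor (R : Type*) [Ring R] : Prop :=
  IsSimpleRing R ∧ VNRegular R ∧ Module.Injective R R ∧ Module.Injective Rᵐᵒᵖ Rᵐᵒᵖ ∧
    ∃ N : R → ℝ, IsRankFunction N ∧ Set.range N = Set.Icc (0 : ℝ) 1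

/-- An extremal pseudo-rank function: an extreme point of the convex set of all
pseudo-rank functions. -/
def IsExtremalPseudoRankFunction {R : Type*} [Ring R] (N : R → ℝ) : Prop :=
  N ∈ Set.extremePoints ℝ {S : R → ℝ | IsPseudoRankFunction S}

/-! ### Matricial and ultramatricial algebras -/

/-- A matricial `K`-algebra. -/
def IsMatricialAlgebra (K : Type*) [Field K] (A : Type*) [Ring A] [Algebra K A] : Prop :=
  ∃ (k : ℕ) (n : Fin (k + 1) → ℕ), (∀ i, 0 < n i) ∧
    Nonempty (A ≃ₐ[K] ((i : Fin (k + 1)) → Matrix (Fin (n i)) (Fin (n i)) K))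

/-- An ultramatricial `K`-algebra: the increasing union of matricial subalgebras. -/
def IsUltramatricialAlgebra (K : Type*) [Field K] (B : Type*) [Ring B] [Algebra K B] : Prop :=
  ∃ C : ℕ → Subalgebra K B, (∀ n, C n ≤ C (n + 1)) ∧
    (∀ n, IsMatricialAlgebra K (C n)) ∧ (∀ b : B, ∃ n, b ∈ C n)

/-- `Q`, with rank function `N`, is the rank-metric completion of a direct limit of the matrix
algebras `M_{p n}(K)`: it is complete and carries a dense increasing tower of unital subalgebras
isomorphic to `M_{p n}(K)`. -/
def IsMatrixTowerCompletion (K : Type*) [Field K] (Q : Type*) [Ring Q] [Algebra K Q]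
    (N : Q → ℝ) (p : ℕ → ℕ) : Prop :=
  IsRankFunction N ∧ RankComplete N ∧
    ∃ A : ℕ → Subalgebra K Q, (∀ n, A n ≤ A (n + 1)) ∧
      (∀ n, Nonempty ((A n) ≃ₐ[K] Matrix (Fin (p n)) (Fin (p n)) K)) ∧
      RankDense N (⋃ n, (A n : Set Q))

/-- `Q` is (a copy of) von Neumann's continuous factor `M_K`, the completion of
`lim_n M_{2^n}(K)` with respect to its unique rank function. -/
def IsMK (K : Type*) [Field K] (Q : Type*) [Ring Q] [Algebra K Q] (N : Q → ℝ) : Prop :=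
  IsMatrixTowerCompletion K Q N (fun n => 2 ^ n)

/-- The canonical block-diagonal unital embedding `M_a(K) → M_b(K)`, `z ↦ z ⊗ 1_g`,
where `b = a * g`. -/
def blockEmbedFun (K : Type*) [Semiring K] {a : ℕ} (g b : ℕ) (h : a * g = b)
    (z : Matrix (Fin a) (Fin a) K) : Matrix (Fin b) (Fin b) K :=
  Matrix.reindex (finProdFinEquiv.trans (finCongr h)) (finProdFinEquiv.trans (finCongr h))
    (z ⊗ₖ (1 : Matrix (Fin g) (Fin g) K))

end AraClaramunt
namespace AraClaramunt

/-! ### Star notions -/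

/-- Properness of an involution: `x* x = 0` implies `x = 0`. -/
def ProperStar (R : Type*) [NonUnitalNonAssocRing R] [Star R] : Prop :=
  ∀ x : R, star x * x = 0 → x = 0

/-- A projection: a self-adjoint idempotent. -/
def IsProjection {R : Type*} [Mul R] [Star R] (p : R) : Prop :=
  star p = p ∧ p * p = p

/-- The order on projections: `q ≤ p` iff `p q = q p = q`. -/
def ProjLE {R : Type*} [Mul R] (q p : R) : Prop :=
  p * q = q ∧ q * p = q

/-- `*`-equivalence of projections: `e = w w*` and `f = w* w` for some `w`. -/
def StarEquivProj {R : Type*} [Mul R] [Star R] (e f : R) : Prop :=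
  ∃ w : R, e = w * star w ∧ f = star w * w

/-- Equivalence of projections: `e = x y`, `f = y x` with `x ∈ eRf`, `y ∈ fRe`. -/
def EquivProj {R : Type*} [Mul R] (e f : R) : Prop :=
  ∃ x y : R, x = e * x * f ∧ y = f * y * e ∧ e = x * y ∧ f = y * x

/-- `y` is the relative inverse of `x` in a `*`-regular ring. -/
def IsRelativeInverse {R : Type*} [Mul R] [Star R] (x y : R) : Prop :=
  x * y * x = x ∧ y * x * y = y ∧ star (x * y) = x * y ∧ star (y * x) = y * x

/-- `e = LP(x)`: `e` is a projection with `x R = e R`. -/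
def IsLeftProjOf {R : Type*} [Mul R] [Star R] (x e : R) : Prop :=
  IsProjection e ∧ e * x = x ∧ ∃ y : R, e = x * y

/-- `f = RP(x)`: `f` is a projection with `R x = R f`. -/
def IsRightProjOf {R : Type*} [Mul R] [Star R] (x f : R) : Prop :=
  IsProjection f ∧ x * f = x ∧ ∃ y : R, f = y * x

/-- Positive definiteness of the involution of a field. -/
def PosDefStar (F : Type*) [Field F] [StarRing F] : Prop :=
  ∀ (n : ℕ) (x : Fin n → F), (∑ i, star (x i) * x i) = 0 → ∀ i, x i = 0

/-- `*`-Pythagorean field. -/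
def StarPythagorean (F : Type*) [Field F] [StarRing F] : Prop :=
  ∀ x y : F, ∃ z : F, x * star x + y * star y = z * star z

/-- A standard matricial `*`-algebra over `(F, *)`: a `*`-algebra `*`-isomorphic to a finite
product of matrix algebras `M_{n i}(F)` with the `*`-transpose involution. -/
def IsStandardMatricialStarAlgebra (F : Type*) [Field F] [StarRing F]
    (A : Type*) [Ring A] [Algebra F A] [StarRing A] [StarModule F A] : Prop :=
  ∃ (k : ℕ) (n : Fin (k + 1) → ℕ), (∀ i, 0 < n i) ∧
    Nonempty (A ≃⋆ₐ[F] ((i : Fin (k + 1)) → Matrix (Fin (n i)) (Fin (n i)) F))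

/-- A map `M_a(F) → M_b(F)` is standard (up to a permutation of the index set) if it is
`z ↦ diag(z, …, z)` (multiplicity `t`), suitably reindexed. -/
def IsStandardMatrixMap (F : Type*) [Field F] {a b : ℕ}
    (Φ : Matrix (Fin a) (Fin a) F → Matrix (Fin b) (Fin b) F) : Prop :=
  ∃ (t : ℕ) (E : Fin a × Fin t ≃ Fin b),
    ∀ z, Φ z = Matrix.reindex E E (Matrix.blockDiagonal fun _ : Fin t => z)

/-- A map between finite products of matrix algebras over `F` is standard (block diagonal,
up to a permutation of the index sets): it is determined by multiplicities `t j i`, the `j`-th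
component being the block-diagonal sum of `t j i` copies of the `i`-th component of the input. -/
def IsStandardBlockMap (F : Type*) [Field F] {k l : ℕ} (n : Fin (k + 1) → ℕ)
    (m : Fin (l + 1) → ℕ)
    (Φ : ((i : Fin (k + 1)) → Matrix (Fin (n i)) (Fin (n i)) F) →
      ((j : Fin (l + 1)) → Matrix (Fin (m j)) (Fin (m j)) F)) : Prop :=
  ∃ t : Fin (l + 1) → Fin (k + 1) → ℕ,
    ∃ E : (j : Fin (l + 1)) →
      ((Σ c : (Σ i : Fin (k + 1), Fin (t j i)), Fin (n c.1)) ≃ Fin (m j)),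
      ∀ z j, Φ z j =
        Matrix.reindex (E j) (E j)
          (Matrix.blockDiagonal' fun c : (Σ i : Fin (k + 1), Fin (t j i)) => z c.1)

end AraClaramunt
namespace AraClaramunt

/-- The `*`-matrix-unit approximation property for a constant `c` and a size `p`
(Lemma 4.8 of the paper): `*`-matrix units of `M_p(F)` which are almost contained in a
`*`-regular `*`-subalgebra `A` (up to `ε` in rank) can be realized exactly inside `A`, moving
each of them by at most `c * ε`. -/
def StarMatrixUnitApproxProperty (c : ℝ) (p : ℕ) : Prop :=
  ∀ (F : Type) [Field F] [StarRing F]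
    (B : Type) [Ring B] [Algebra F B] [StarRing B] [StarModule F B]
    (N : B → ℝ) (A : StarSubalgebra F B),
    IsPseudoRankFunction N → (∀ b : B, N (star b) = N b) →
    (∀ x ∈ A, ∃ y ∈ A, x = x * y * x) →
    (∀ x ∈ A, star x * x = 0 → x = 0) →
    ∀ ε : ℝ, 0 < ε →
      ∀ ρ : Matrix (Fin p) (Fin p) F →⋆ₙₐ[F] B,
        (∀ i j : Fin p, ∃ a ∈ A, N (ρ (Matrix.single i j 1) - a) < ε) →
          ∃ ψ : Matrix (Fin p) (Fin p) F →⋆ₙₐ[F] A,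
            ∀ i j : Fin p,
              N (ρ (Matrix.single i j 1)
                - (ψ (Matrix.single i j 1) : B)) < c * ε


/-!
The diagonal units `ρ(e_ii)` are first replaced, one at a time, by pairwise orthogonal
projections `f_i ∈ A`: an approximant of the next unit is cut down by the complement of the
projections already chosen and replaced by its support projection. Next, `f_{j₀} a f_j`, with `a`
an approximant of `ρ(e_{j₀ j})`, is trimmed to a partial isometry `w_j ∈ A` from a subprojection
of `f_j` to a subprojection of `f_{j₀}`; with `e` the meet of the range projections `w_j w_j*`,
the elements `(e w_i)* (e w_j)` are `*`-matrix units in `A`. In a `*`-regular ring support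
projections, meets and the idempotent part of a self-adjoint element are all obtained from the
data by multiplication, and `N` decreases under multiplication, so every step loses only a
factor depending on `p`.
-/

namespace IsPseudoRankFunction

variable {B : Type*} [Ring B] {N : B → ℝ}

theorem map_zero (hN : IsPseudoRankFunction N) : N 0 = 0 := by
  have h := hN.add_of_orthogonal 0 0 .zero .zero (mul_zero 0) (mul_zero 0)
  rw [add_zero] at h
  linarith

theorem map_neg (hN : IsPseudoRankFunction N) (x : B) : N (-x) = N x := by
  have h₁ := hN.mul_le_right (-1) x
  have h₂ := hN.mul_le_right (-1) (-x)
  rw [neg_one_mul] at h₁ h₂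
  rw [neg_neg] at h₂
  linarith

theorem map_sub_comm (hN : IsPseudoRankFunction N) (x y : B) : N (x - y) = N (y - x) := by
  rw [← hN.map_neg, neg_sub]

theorem map_sub_le (hN : IsPseudoRankFunction N) (x y : B) : N (x - y) ≤ N x + N y := by
  simpa [sub_eq_add_neg, hN.map_neg] using hN.subadditive x (-y)

theorem sub_le_sub_add_sub (hN : IsPseudoRankFunction N) (x y z : B) :
    N (x - z) ≤ N (x - y) + N (y - z) := by
  simpa using hN.subadditive (x - y) (y - z)

theorem mul_sub_mul_le (hN : IsPseudoRankFunction N) (a b c d : B) :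
    N (a * b - c * d) ≤ N (a - c) + N (b - d) := by
  have h : a * b - c * d = (a - c) * b + c * (b - d) := by noncomm_ring
  rw [h]
  linarith [hN.subadditive ((a - c) * b) (c * (b - d)), hN.mul_le_left (a - c) b,
    hN.mul_le_right c (b - d)]

theorem mul_self_sub_le {X z : B} (hN : IsPseudoRankFunction N) (hX : X * X = X) :
    N (z * z - z) ≤ 3 * N (X - z) := by
  have h : z * z - z = (z - X) * z + X * (z - X) + (X - z) :=
    calc z * z - z = (z - X) * z + X * (z - X) + (X * X - z) := by noncomm_ring
      _ = _ := by rw [hX]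
  rw [h]
  linarith [hN.subadditive ((z - X) * z + X * (z - X)) (X - z),
    hN.subadditive ((z - X) * z) (X * (z - X)), hN.mul_le_left (z - X) z,
    hN.mul_le_right X (z - X), hN.map_sub_comm z X]

theorem mul_star_sub_le [StarRing B] (hN : IsPseudoRankFunction N)
    (hstarN : ∀ b, N (star b) = N b) (x y : B) : N (x * star x - y * star y) ≤ 2 * N (x - y) := by
  have h := hN.mul_sub_mul_le x (star x) y (star y)
  rw [← star_sub, hstarN] at h
  linarith

theorem star_mul_sub_le [StarRing B] (hN : IsPseudoRankFunction N)
    (hstarN : ∀ b, N (star b) = N b) (x y : B) : N (star x * x - star y * y) ≤ 2 * N (x - y) := by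
  have h := hN.mul_sub_mul_le (star x) x (star y) y
  rw [← star_sub, hstarN] at h
  linarith

end IsPseudoRankFunction

theorem ProjLE.trans {M : Type*} [Semigroup M] {a b c : M} (hab : ProjLE a b)
    (hbc : ProjLE b c) : ProjLE a c := by
  constructor
  · rw [← hab.1, ← mul_assoc, hbc.1]
  · rw [← hab.2, mul_assoc, hbc.2]

section StarRing

variable {B : Type*} [Ring B] [StarRing B]

theorem IsLeftProjOf.isRightProjOf {x g : B} (hx : star x = x) (hg : IsLeftProjOf x g) :
    IsRightProjOf x g := by
  obtain ⟨hgp, hgx, y, rfl⟩ := hg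
  refine ⟨hgp, ?_, star y, ?_⟩
  · simpa [hx, hgp.1] using congrArg star hgx
  · rw [← hgp.1, star_mul, hx]

theorem IsLeftProjOf.commute {x g y : B} (hl : IsLeftProjOf x g) (hr : IsRightProjOf x g)
    (hy : Commute y x) : Commute y g := by
  obtain ⟨hgp, hgx, u, hu⟩ := hl
  obtain ⟨-, hxg, v, hv⟩ := hr
  have hyg : g * (y * g) = y * g := by
    rw [show y * g = x * (y * u) by rw [hu, ← mul_assoc, hy.eq, mul_assoc], ← mul_assoc, hgx]
  have hgy : g * y * g = g * y := by
    rw [show g * y = v * y * x by rw [hv, mul_assoc, ← hy.eq, ← mul_assoc], mul_assoc _ x, hxg]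
  calc y * g = g * y * g := by rw [mul_assoc, hyg]
    _ = g * y := hgy

theorem mul_sum_eq_of_orthogonal {ι : Type*} {s : Finset ι} {f : ι → B}
    (hf : ∀ i ∈ s, IsProjection (f i)) (horth : ∀ i ∈ s, ∀ j ∈ s, i ≠ j → f i * f j = 0)
    {k : ι} (hk : k ∈ s) : f k * ∑ i ∈ s, f i = f k := by
  rw [Finset.mul_sum, Finset.sum_eq_single k (fun j hj hjk => horth k hk j hj hjk.symm)
    (absurd hk), (hf k hk).2]

theorem isProjection_sum {ι : Type*} {s : Finset ι} {f : ι → B}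
    (hf : ∀ i ∈ s, IsProjection (f i)) (horth : ∀ i ∈ s, ∀ j ∈ s, i ≠ j → f i * f j = 0) :
    IsProjection (∑ i ∈ s, f i) := by
  refine ⟨by rw [star_sum]; exact Finset.sum_congr rfl fun i hi => (hf i hi).1, ?_⟩
  rw [Finset.sum_mul]
  exact Finset.sum_congr rfl fun i hi => mul_sum_eq_of_orthogonal hf horth hi

theorem isProjection_mul_star {w : B} (hw : w * star w * w = w) : IsProjection (w * star w) :=
  ⟨by rw [star_mul, star_star], by rw [← mul_assoc, hw]⟩

theorem IsLeftProjOf.rank_sub_le {N : B → ℝ} {X b g : B} (hN : IsPseudoRankFunction N)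
    (hX : X * X = X) (hl : IsLeftProjOf b g) (hr : IsRightProjOf b g) :
    N (X - g) ≤ 3 * N (X - b) := by
  obtain ⟨-, -, u, hu⟩ := hl
  have h : X - g = (X - b) * (1 - g) - ((b - X) + X * (X - b)) * u :=
    calc X - g = X - g + (b * g - b) - (X * X - X) * u := by rw [hr.2.1, hX]; simp
      _ = _ := by rw [hu]; noncomm_ring
  rw [h]
  linarith [hN.map_sub_le ((X - b) * (1 - g)) (((b - X) + X * (X - b)) * u),
    hN.mul_le_left (X - b) (1 - g), hN.mul_le_left ((b - X) + X * (X - b)) u,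
    hN.subadditive (b - X) (X * (X - b)), hN.mul_le_right X (X - b), hN.map_sub_comm b X]

end StarRing

structure IsStarMatrixUnits {ι B : Type*} [DecidableEq ι] [Mul B] [Zero B] [Star B]
    (u : ι → ι → B) : Prop where
  mul_eq : ∀ i j k l, u i j * u k l = if j = k then u i l else 0
  star_eq : ∀ i j, star (u i j) = u j i

namespace IsStarMatrixUnits

variable {ι : Type*} [DecidableEq ι]

theorem single (R : Type*) [Semiring R] [StarRing R] [Fintype ι] :
    IsStarMatrixUnits fun i j : ι => (Matrix.single i j 1 : Matrix ι ι R) where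
  mul_eq i j k l := by
    split_ifs with h
    · rw [h, Matrix.single_mul_single_same, one_mul]
    · simp [h]
  star_eq i j := by rw [Matrix.star_eq_conjTranspose, Matrix.conjTranspose_single, star_one]

theorem map {R C D : Type*} [Monoid R] [NonUnitalNonAssocSemiring C] [DistribMulAction R C]
    [Star C] [NonUnitalNonAssocSemiring D] [DistribMulAction R D] [Star D] {u : ι → ι → C}
    (hu : IsStarMatrixUnits u) (f : C →⋆ₙₐ[R] D) : IsStarMatrixUnits fun i j => f (u i j) where
  mul_eq i j k l := by rw [← map_mul, hu.mul_eq]; split_ifs <;> simp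
  star_eq i j := by rw [← map_star, hu.star_eq]

variable {B : Type*} [Ring B] [StarRing B]

theorem of_row {v : ι → B} {e : B} (hv : ∀ j k, v j * star (v k) = if j = k then e else 0)
    (hev : ∀ j, e * v j = v j) : IsStarMatrixUnits fun i j => star (v i) * v j where
  mul_eq i j k l := by
    rw [mul_assoc, ← mul_assoc (v j), hv]
    split_ifs <;> simp [hev]
  star_eq i j := by rw [star_mul, star_star]

theorem of_partialIsometries {e : B} {w f : ι → B} (he : IsProjection e)
    (hle : ∀ j, ProjLE e (w j * star (w j))) (hwf : ∀ j, w j * f j = w j)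
    (hf : ∀ j, star (f j) = f j) (horth : Pairwise fun i j => f i * f j = 0) :
    IsStarMatrixUnits fun i j => star (e * w i) * (e * w j) := by
  refine of_row (fun j k => ?_) (fun j => by rw [← mul_assoc, he.2])
  rw [star_mul, he.1, mul_assoc, ← mul_assoc (w j)]
  split_ifs with hjk
  · rw [hjk, ← mul_assoc, (hle k).2, he.2]
  · rw [← hwf j, ← hwf k, star_mul, hf]
    simp only [mul_assoc]
    rw [← mul_assoc (f j), horth hjk, zero_mul, mul_zero, mul_zero]

theorem rank_sub_star_mul_le {q : ι → ι → B} (hq : IsStarMatrixUnits q) {N : B → ℝ}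
    (hN : IsPseudoRankFunction N) (hstarN : ∀ b, N (star b) = N b) (j₀ : ι) (v : ι → B)
    (i j : ι) : N (q i j - star (v i) * v j) ≤ N (q j₀ i - v i) + N (q j₀ j - v j) := by
  have h := hN.mul_sub_mul_le (star (q j₀ i)) (q j₀ j) (star (v i)) (v j)
  rwa [hq.star_eq, hq.mul_eq, if_pos rfl, ← hq.star_eq j₀ i, ← star_sub, hstarN] at h

variable {R : Type*} [CommRing R] [StarRing R] [Algebra R B] [StarModule R B]

theorem restrict {A : StarSubalgebra R B} {u : ι → ι → B} (hu : IsStarMatrixUnits u)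
    (huA : ∀ i j, u i j ∈ A) : IsStarMatrixUnits fun i j => (⟨u i j, huA i j⟩ : A) where
  mul_eq i j k l := by
    apply Subtype.ext
    simp only [MulMemClass.coe_mul, hu.mul_eq]
    split_ifs <;> rfl
  star_eq i j := Subtype.ext (hu.star_eq i j)

variable [Fintype ι]

def toNonUnitalStarAlgHom {u : ι → ι → B} (hu : IsStarMatrixUnits u) :
    Matrix ι ι R →⋆ₙₐ[R] B where
  toFun M := ∑ i, ∑ j, M i j • u i j
  map_smul' c M := by simp only [Matrix.smul_apply, smul_eq_mul, mul_smul, Finset.smul_sum,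
    MonoidHom.id_apply]
  map_zero' := by simp
  map_add' M M' := by simp only [Matrix.add_apply, add_smul, Finset.sum_add_distrib]
  map_mul' M M' := by
    change ∑ i, ∑ j, (M * M') i j • u i j =
      (∑ i, ∑ j, M i j • u i j) * ∑ i, ∑ j, M' i j • u i j
    simp only [Matrix.mul_apply, Finset.sum_smul]
    rw [Finset.sum_mul]
    simp_rw [Finset.sum_mul, Finset.mul_sum, smul_mul_smul_comm, hu.mul_eq, smul_ite, smul_zero,
      Finset.sum_ite_irrel, Finset.sum_const_zero,
      Finset.sum_ite_eq, Finset.mem_univ, if_true]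
    exact Finset.sum_congr rfl fun _ _ => Finset.sum_comm
  map_star' M := by
    simp only [Matrix.star_apply, star_sum, star_smul, hu.star_eq]
    exact Finset.sum_comm

theorem toNonUnitalStarAlgHom_single {u : ι → ι → B} (hu : IsStarMatrixUnits u) (i j : ι) :
    hu.toNonUnitalStarAlgHom (Matrix.single i j 1 : Matrix ι ι R) = u i j := by
  simp [toNonUnitalStarAlgHom, Matrix.single_apply, ite_and]

end IsStarMatrixUnits

section StarRegular

variable {R : Type*} [CommRing R] [StarRing R]
variable {B : Type*} [Ring B] [StarRing B] [Algebra R B] [StarModule R B]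

structure IsStarRegular (A : StarSubalgebra R B) : Prop where
  regular : ∀ x ∈ A, ∃ y ∈ A, x = x * y * x
  proper : ∀ x ∈ A, star x * x = 0 → x = 0

namespace IsStarRegular

variable {A : StarSubalgebra R B} (hA : IsStarRegular A)
include hA

theorem exists_isLeftProjOf_of_selfAdjoint {d : B} (hd : d ∈ A) (hsa : star d = d) :
    ∃ g ∈ A, IsLeftProjOf d g := by
  obtain ⟨t, ht, hdt⟩ := hA.regular (d * d) (mul_mem hd hd)
  set μ := t * (d * d) * star t with hμ
  have hμA : μ ∈ A := mul_mem (mul_mem ht (mul_mem hd hd)) (star_mem ht)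
  have hμsa : star μ = μ := by simp only [hμ, star_mul, star_star, hsa, mul_assoc]
  have hdμd : d * d * μ * (d * d) = d * d := by
    have hdt' : d * d * star t * (d * d) = d * d := by
      simpa [hsa, mul_assoc] using (congrArg star hdt).symm
    calc d * d * μ * (d * d) = d * d * t * (d * d) * star t * (d * d) := by
          simp only [hμ, mul_assoc]
      _ = d * d := by rw [← hdt, hdt']
  -- properness turns `d² μ d² = d²` into `d μ d² = d`
  have key : d * μ * (d * d) = d := by
    refine (sub_eq_zero.mp (hA.proper _ (sub_mem hd (mul_mem (mul_mem hd hμA)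
      (mul_mem hd hd))) ?_)).symm
    calc star (d - d * μ * (d * d)) * (d - d * μ * (d * d))
        = d * d - 2 • (d * d * μ * (d * d)) + d * d * μ * (d * d) * μ * (d * d) := by
          simp only [star_sub, star_mul, hsa, hμsa]; noncomm_ring
      _ = 0 := by rw [hdμd, hdμd]; abel
  have key' : d * d * μ * d = d := by simpa [hsa, hμsa, mul_assoc] using congrArg star key
  refine ⟨d * μ * d, mul_mem (mul_mem hd hμA) hd, ⟨?_, ?_⟩, ?_, μ * d, mul_assoc _ _ _⟩
  · simp only [star_mul, hsa, hμsa, mul_assoc]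
  · rw [show d * μ * d * (d * μ * d) = d * μ * (d * d * μ * d) by simp only [mul_assoc], key']
  · rw [mul_assoc, key]

theorem exists_isLeftProjOf {x : B} (hx : x ∈ A) : ∃ g ∈ A, IsLeftProjOf x g := by
  have hsa : star (x * star x) = x * star x := by rw [star_mul, star_star]
  obtain ⟨g, hgA, hl⟩ := hA.exists_isLeftProjOf_of_selfAdjoint (mul_mem hx (star_mem hx)) hsa
  obtain ⟨-, hDg, -⟩ := hl.isRightProjOf hsa
  obtain ⟨hgp, hgD, u, hu⟩ := hl
  have hgx : g * x = x := by
    set y := x - g * x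
    have hyy : y * star y = 0 := by
      calc y * star y = x * star x - x * star x * g - g * (x * star x)
            + g * (x * star x) * g := by simp only [y, star_sub, star_mul, hgp.1]; noncomm_ring
        _ = 0 := by rw [hDg, hgD, hDg]; abel
    have := hA.proper (star y) (star_mem (sub_mem hx (mul_mem hgA hx))) (by rwa [star_star])
    exact (sub_eq_zero.mp (star_eq_zero.mp this)).symm
  exact ⟨g, hgA, hgp, hgx, star x * u, by rw [hu, mul_assoc]⟩

theorem exists_meet {e e' : B} (he : e ∈ A) (he' : e' ∈ A) (hpe : IsProjection e)
    (hpe' : IsProjection e') :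
    ∃ m ∈ A, IsProjection m ∧ ProjLE m e ∧ ProjLE m e' ∧ ∃ y, e - m = (e - e * e') * y := by
  obtain ⟨g, hgA, hgp, hgx, u, hu⟩ := hA.exists_isLeftProjOf (sub_mem he (mul_mem he he'))
  have heg : e * g = g := by rw [hu, ← mul_assoc, mul_sub, ← mul_assoc, hpe.2]
  have hge : g * e = g := by simpa [hgp.1, hpe.1] using congrArg star heg
  have hme' : (e - g) * e' = e - g := by
    rw [← sub_eq_zero, ← sub_eq_zero.mpr hgx]
    simp only [mul_sub, sub_mul, ← mul_assoc, hge]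
    abel
  refine ⟨e - g, sub_mem he hgA, ⟨?_, ?_⟩, ⟨?_, ?_⟩, ⟨?_, hme'⟩, u, by rw [sub_sub_cancel, hu]⟩
  · rw [star_sub, hpe.1, hgp.1]
  · simp only [mul_sub, sub_mul, hpe.2, heg, hge, hgp.2, sub_self, sub_zero]
  · rw [mul_sub, hpe.2, heg]
  · rw [sub_mul, hpe.2, hge]
  · simpa [hpe.1, hpe'.1, hgp.1] using congrArg star hme'

theorem exists_projection_of_selfAdjoint {z : B} (hz : z ∈ A) (hsa : star z = z) :
    ∃ P ∈ A, IsProjection P ∧ z * P = P ∧ (∀ f, z * f = z → P * f = P) ∧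
      ∃ y, z - P = (z * z - z) * y := by
  have hdA : z * z - z ∈ A := sub_mem (mul_mem hz hz) hz
  have hdsa : star (z * z - z) = z * z - z := by rw [star_sub, star_mul, hsa]
  obtain ⟨g, hgA, hl⟩ := hA.exists_isLeftProjOf_of_selfAdjoint hdA hdsa
  have hr := hl.isRightProjOf hdsa
  have hzg : Commute z (1 - g) :=
    (Commute.one_right z).sub_right
      (hl.commute hr (by simp only [Commute, SemiconjBy]; noncomm_ring))
  have hzz : z * z * (1 - g) = z * (1 - g) := by
    rw [← sub_eq_zero, ← sub_mul, mul_sub, mul_one, hr.2.1, sub_self]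
  have hgg : (1 - g) * (1 - g) = 1 - g := by
    simp only [mul_sub, sub_mul, one_mul, mul_one, hl.1.2]; abel
  obtain ⟨u, hu⟩ := hl.2.2
  refine ⟨z * (1 - g), mul_mem hz (sub_mem (one_mem A) hgA), ⟨?_, ?_⟩, ?_, ?_, z * u, ?_⟩
  · rw [star_mul, star_sub, star_one, hl.1.1, hsa, hzg.eq]
  · calc z * (1 - g) * (z * (1 - g)) = z * z * ((1 - g) * (1 - g)) := by
          rw [mul_assoc z (1 - g), ← mul_assoc (1 - g), ← hzg.eq]; simp only [mul_assoc]
      _ = z * (1 - g) := by rw [hgg, hzz]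
  · rw [← mul_assoc, hzz]
  · intro f hf
    rw [hzg.eq, mul_assoc, hf]
  · rw [mul_sub, mul_one, sub_sub_cancel, hu, ← mul_assoc, ← mul_assoc]
    congr 1
    noncomm_ring

end IsStarRegular

end StarRegular

section RankEstimates

variable {R : Type*} [CommRing R] [StarRing R]
variable {B : Type*} [Ring B] [StarRing B] [Algebra R B] [StarModule R B]
variable {A : StarSubalgebra R B} {N : B → ℝ}

theorem IsStarRegular.exists_partialIsometry_near (hA : IsStarRegular A)
    (hN : IsPseudoRankFunction N) (hstarN : ∀ b, N (star b) = N b) {q c f : B}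
    (hq : q * star q * q = q) (hc : c ∈ A) (hcf : c * f = c) :
    ∃ w ∈ A, w * star w * w = w ∧ (∃ y, w = c * y) ∧ w * f = w ∧ N (q - w) ≤ 9 * N (q - c) := by
  have hzsa : star (star c * c) = star c * c := by rw [star_mul, star_star]
  obtain ⟨P, hPA, hP, hzP, hPf, y, hy⟩ :=
    hA.exists_projection_of_selfAdjoint (mul_mem (star_mem hc) hc) hzsa
  refine ⟨c * P, mul_mem hc hPA, ?_, ⟨P, rfl⟩, ?_, ?_⟩
  · calc c * P * star (c * P) * (c * P) = c * (P * P) * (star c * c * P) := by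
          rw [star_mul, hP.1]; simp only [mul_assoc]
      _ = c * P := by rw [hzP, hP.2, mul_assoc, hP.2]
  · rw [mul_assoc, hPf f (by rw [mul_assoc, hcf])]
  have hqP : q - c * P = (q - c) * P + q * ((star q * q - P) * (1 - P)) :=
    calc q - c * P = (q - c) * P + (q * star q * q * (1 - P) - q * (P - P * P)) := by
          rw [hq, hP.2, sub_self, mul_zero, sub_zero]; noncomm_ring
      _ = _ := by noncomm_ring
  have hzP' : N (star c * c - P) ≤ N (star c * c * (star c * c) - star c * c) := by
    rw [hy]; exact hN.mul_le_left _ _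
  have hidem : star q * q * (star q * q) = star q * q :=
    calc star q * q * (star q * q) = star q * (q * star q * q) := by simp only [mul_assoc]
      _ = star q * q := by rw [hq]
  rw [hqP]
  linarith [hN.subadditive ((q - c) * P) (q * ((star q * q - P) * (1 - P))),
    hN.mul_le_left (q - c) P, hN.mul_le_right q ((star q * q - P) * (1 - P)),
    hN.mul_le_left (star q * q - P) (1 - P), hN.sub_le_sub_add_sub (star q * q) (star c * c) P,
    hN.mul_self_sub_le (z := star c * c) hidem, hN.star_mul_sub_le hstarN q c]

theorem IsStarRegular.exists_partialIsometry_between (hA : IsStarRegular A)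
    (hN : IsPseudoRankFunction N) (hstarN : ∀ b, N (star b) = N b) {ι : Type*} [DecidableEq ι]
    {q : ι → ι → B} (hq : IsStarMatrixUnits q) {i j : ι} {fi fj a : B}
    (hfi : fi ∈ A ∧ IsProjection fi) (hfj : fj ∈ A ∧ IsProjection fj) (ha : a ∈ A) :
    ∃ w ∈ A, w * star w * w = w ∧ fi * w = w ∧ w * fj = w ∧
      N (q i j - w) ≤ 9 * (N (q i i - fi) + N (q i j - a) + N (q j j - fj)) := by
  have hqq : ∀ i j k, q i j * q j k = q i k := fun i j k => by rw [hq.mul_eq, if_pos rfl]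
  have hq' : q i j * star (q i j) * q i j = q i j := by rw [hq.star_eq, hqq, hqq]
  obtain ⟨w, hwA, hw, ⟨y, rfl⟩, hwf, hqw⟩ := hA.exists_partialIsometry_near hN hstarN hq'
    (mul_mem (mul_mem hfi.1 ha) hfj.1) (by rw [mul_assoc, hfj.2.2])
  refine ⟨_, hwA, hw, by simp only [← mul_assoc, hfi.2.2], hwf, hqw.trans ?_⟩
  have h₁ := hN.mul_sub_mul_le (q i i) (q i j * q j j) fi (a * fj)
  have h₂ := hN.mul_sub_mul_le (q i j) (q j j) a fj
  rw [hqq, hqq, ← mul_assoc] at h₁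
  rw [hqq] at h₂
  linarith

theorem IsStarRegular.exists_projection_orthogonal_near (hA : IsStarRegular A)
    (hN : IsPseudoRankFunction N) (hstarN : ∀ b, N (star b) = N b) {P Q X a : B} (hPA : P ∈ A)
    (hP : IsProjection P) (hX : IsProjection X) (hXQ : X * Q = 0) (hQX : Q * X = 0)
    (ha : a ∈ A) :
    ∃ g ∈ A, IsProjection g ∧ P * g = 0 ∧ N (X - g) ≤ 6 * N (P - Q) + 6 * N (X - a) := by
  set b := (1 - P) * (a * star a) * (1 - P)
  have hbA : b ∈ A :=
    mul_mem (mul_mem (sub_mem (one_mem A) hPA) (mul_mem ha (star_mem ha))) (sub_mem (one_mem A) hPA)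
  have hbsa : star b = b := by
    simp only [b, star_mul, star_sub, star_one, hP.1, star_star, mul_assoc]
  obtain ⟨g, hgA, hl⟩ := hA.exists_isLeftProjOf_of_selfAdjoint hbA hbsa
  have hPg : P * g = 0 := by
    obtain ⟨-, -, u, hu⟩ := hl
    simp only [hu, b, ← mul_assoc, mul_sub, mul_one, hP.2, sub_self, zero_mul]
  refine ⟨g, hgA, hl.1, hPg, ?_⟩
  have hXb : N (X - b) ≤ 2 * N (P - Q) + 2 * N (X - a) := by
    have hX' : X = (1 - Q) * (X * star X) * (1 - Q) := by
      simp only [hX.1, hX.2, mul_sub, sub_mul, mul_one, one_mul, hXQ, hQX, sub_zero]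
    have hPQ : 1 - Q - (1 - P) = P - Q := sub_sub_sub_cancel_left Q P 1
    calc N (X - b) = N ((1 - Q) * (X * star X) * (1 - Q) - b) := by rw [← hX']
      _ ≤ _ := by
        linarith [congrArg N hPQ,
          hN.mul_sub_mul_le ((1 - Q) * (X * star X)) (1 - Q) ((1 - P) * (a * star a)) (1 - P),
          hN.mul_sub_mul_le (1 - Q) (X * star X) (1 - P) (a * star a),
          hN.mul_star_sub_le hstarN X a]
  linarith [hl.rank_sub_le hN hX.2 (hl.isRightProjOf hbsa)]

theorem IsStarRegular.exists_orthogonal_projections_near (hA : IsStarRegular A)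
    (hN : IsPseudoRankFunction N) (hstarN : ∀ b, N (star b) = N b) {ι : Type*} [DecidableEq ι]
    {X : ι → B} (hX : ∀ i, IsProjection (X i)) (hXorth : Pairwise fun i j => X i * X j = 0)
    {ε : ℝ} (happrox : ∀ i, ∃ a ∈ A, N (X i - a) ≤ ε) (s : Finset ι) :
    ∃ f : ι → B, (∀ i ∈ s, f i ∈ A ∧ IsProjection (f i) ∧ N (X i - f i) ≤ 7 ^ s.card * ε) ∧
      (∀ i ∈ s, ∀ j ∈ s, i ≠ j → f i * f j = 0) ∧
      N (∑ i ∈ s, f i - ∑ i ∈ s, X i) ≤ (7 ^ s.card - 1) * ε := by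
  induction s using Finset.induction_on with
  | empty => exact ⟨0, by simp, by simp, by simp [hN.map_zero]⟩
  | insert i s hi ih =>
    obtain ⟨f, hf, horth, hsum⟩ := ih
    obtain ⟨a, ha, hXa⟩ := happrox i
    have hε : 0 ≤ ε := (hN.nonneg _).trans hXa
    have hne : ∀ k ∈ s, k ≠ i := fun k hk hki => hi (hki ▸ hk)
    have hfP : ∀ k ∈ s, f k * ∑ j ∈ s, f j = f k :=
      fun k hk => mul_sum_eq_of_orthogonal (fun j hj => (hf j hj).2.1) horth hk
    obtain ⟨g, hgA, hg, hPg, hXg⟩ := hA.exists_projection_orthogonal_near hN hstarN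
      (sum_mem fun k hk => (hf k hk).1) (isProjection_sum (fun k hk => (hf k hk).2.1) horth)
      (hX i) (Q := ∑ k ∈ s, X k)
      (by rw [Finset.mul_sum]; exact Finset.sum_eq_zero fun k hk => hXorth (hne k hk).symm)
      (by rw [Finset.sum_mul]; exact Finset.sum_eq_zero fun k hk => hXorth (hne k hk)) ha
    have hfg : ∀ k ∈ s, f k * g = 0 := fun k hk => by rw [← hfP k hk, mul_assoc, hPg, mul_zero]
    have hgf : ∀ k ∈ s, g * f k = 0 := fun k hk => by
      simpa [hg.1, (hf k hk).2.1.1] using congrArg star (hfg k hk)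
    have h7 : (7 : ℝ) ^ (s.card + 1) = 7 * 7 ^ s.card := pow_succ' 7 s.card
    have h1 : (1 : ℝ) ≤ 7 ^ s.card := one_le_pow₀ (by norm_num)
    rw [Finset.card_insert_of_notMem hi, h7]
    refine ⟨Function.update f i g, fun k hk => ?_, fun j hj k hk hjk => ?_, ?_⟩
    · rcases Finset.mem_insert.mp hk with rfl | hk
      · rw [Function.update_self]
        exact ⟨hgA, hg, by nlinarith⟩
      · rw [Function.update_of_ne (hne k hk)]
        exact ⟨(hf k hk).1, (hf k hk).2.1, by nlinarith [(hf k hk).2.2]⟩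
    · rcases Finset.mem_insert.mp hj with rfl | hjs <;>
        rcases Finset.mem_insert.mp hk with rfl | hks
      · exact absurd rfl hjk
      · rw [Function.update_self, Function.update_of_ne (hne k hks), hgf k hks]
      · rw [Function.update_self, Function.update_of_ne (hne j hjs), hfg j hjs]
      · rw [Function.update_of_ne (hne j hjs), Function.update_of_ne (hne k hks)]
        exact horth j hjs k hks hjk
    · rw [Finset.sum_insert hi, Finset.sum_insert hi, Function.update_self,
        Finset.sum_congr rfl fun k hk => Function.update_of_ne (hne k hk) g f,
        add_sub_add_comm]
      linarith [hN.subadditive (g - X i) (∑ k ∈ s, f k - ∑ k ∈ s, X k), hN.map_sub_comm g (X i)]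

theorem IsStarRegular.exists_projection_le_family_near (hA : IsStarRegular A)
    (hN : IsPseudoRankFunction N) {ι : Type*} [DecidableEq ι] {X e₀ : B} {E : ι → B}
    (he₀A : e₀ ∈ A) (he₀ : IsProjection e₀) (hE : ∀ i, E i ∈ A ∧ IsProjection (E i)) {δ : ℝ}
    (hXE : ∀ i, N (X - E i) ≤ δ) (s : Finset ι) :
    ∃ e ∈ A, IsProjection e ∧ (∀ i ∈ s, ProjLE e (E i)) ∧
      N (X - e) + 2 * δ ≤ 2 ^ s.card * (N (X - e₀) + 2 * δ) := by
  induction s using Finset.induction_on with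
  | empty => exact ⟨e₀, he₀A, he₀, by simp, by simp⟩
  | insert i s hi ih =>
    obtain ⟨e, heA, he, hle, hbound⟩ := ih
    obtain ⟨m, hmA, hm, hme, hmE, y, hy⟩ := hA.exists_meet heA (hE i).1 he (hE i).2
    refine ⟨m, hmA, hm, fun k hk => ?_, ?_⟩
    · rcases Finset.mem_insert.mp hk with rfl | hk
      · exact hmE
      · exact hme.trans (hle k hk)
    have hsplit : e - e * E i = (e - X) * (1 - E i) + (X - E i) + (E i - X) * E i :=
      calc e - e * E i = (e - X) * (1 - E i) + (X - E i) + (E i - X * E i) := by noncomm_ring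
        _ = _ := by rw [sub_mul (E i), (hE i).2.2]
    have hem : N (e - m) ≤ N (X - e) + 2 * δ := by
      rw [hy]
      linarith [hN.mul_le_left (e - e * E i) y, congrArg N hsplit,
        hN.subadditive ((e - X) * (1 - E i) + (X - E i)) ((E i - X) * E i),
        hN.subadditive ((e - X) * (1 - E i)) (X - E i), hN.mul_le_left (e - X) (1 - E i),
        hN.mul_le_left (E i - X) (E i), hN.map_sub_comm e X, hN.map_sub_comm (E i) X, hXE i]
    rw [Finset.card_insert_of_notMem hi, pow_succ]
    linarith [hN.sub_le_sub_add_sub X e m]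

end RankEstimates

/-- `7 ^ n` comes from orthogonalizing the diagonal units one at a time, `9 * (2 * 7 ^ n + 1)`
from the partial isometries in the first row, and `2 ^ n` from the `n` successive meets. -/
def starMatrixUnitConstant (n : ℕ) : ℝ := 2 ^ (n + 1) * (7 ^ n + 36 * (2 * 7 ^ n + 1))

section MatrixUnits

variable {R : Type*} [CommRing R] [StarRing R]
variable {B : Type*} [Ring B] [StarRing B] [Algebra R B] [StarModule R B]
variable {A : StarSubalgebra R B} {N : B → ℝ}

theorem IsStarRegular.exists_starMatrixUnits_near (hA : IsStarRegular A)
    (hN : IsPseudoRankFunction N) (hstarN : ∀ b, N (star b) = N b) {ι : Type*} [Fintype ι]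
    [DecidableEq ι] (j₀ : ι) {q : ι → ι → B} (hq : IsStarMatrixUnits q) {ε : ℝ}
    (happrox : ∀ i j, ∃ a ∈ A, N (q i j - a) ≤ ε) :
    ∃ u : ι → ι → B, (∀ i j, u i j ∈ A) ∧ IsStarMatrixUnits u ∧
      ∀ i j, N (q i j - u i j) ≤ starMatrixUnitConstant (Fintype.card ι) * ε := by
  have hqq : ∀ i j k, q i j * q j k = q i k := fun i j k => by rw [hq.mul_eq, if_pos rfl]
  obtain ⟨f, hf, horth, -⟩ := hA.exists_orthogonal_projections_near hN hstarN (X := fun j => q j j)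
    (fun j => ⟨hq.star_eq j j, hqq j j j⟩) (fun i j hij => by simp [hq.mul_eq, hij])
    (fun j => happrox j j) Finset.univ
  simp only [Finset.mem_univ, true_implies, Finset.card_univ] at hf horth
  set β := 9 * (2 * (7 ^ Fintype.card ι * ε) + ε) with hβ
  have hrow : ∀ j, ∃ w ∈ A, w * star w * w = w ∧ f j₀ * w = w ∧ w * f j = w ∧
      N (q j₀ j - w) ≤ β := fun j => by
    obtain ⟨a, ha, hqa⟩ := happrox j₀ j
    obtain ⟨w, hwA, hw, hfw, hwf, hqw⟩ := hA.exists_partialIsometry_between hN hstarN hq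
      ⟨(hf j₀).1, (hf j₀).2.1⟩ ⟨(hf j).1, (hf j).2.1⟩ ha
    exact ⟨w, hwA, hw, hfw, hwf, by linarith [(hf j₀).2.2, (hf j).2.2]⟩
  choose w hwA hw hfw hwf hqw using hrow
  obtain ⟨e, heA, he, hle, hqe⟩ := hA.exists_projection_le_family_near hN (X := q j₀ j₀)
    (hf j₀).1 (hf j₀).2.1 (E := fun j => w j * star (w j))
    (fun j => ⟨mul_mem (hwA j) (star_mem (hwA j)), isProjection_mul_star (hw j)⟩) (δ := 2 * β)
    (fun j => by
      have := hN.mul_star_sub_le hstarN (q j₀ j) (w j)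
      rw [hq.star_eq, hqq] at this
      linarith [hqw j])
    Finset.univ
  refine ⟨fun i j => star (e * w i) * (e * w j),
    fun i j => mul_mem (star_mem (mul_mem heA (hwA i))) (mul_mem heA (hwA j)),
    IsStarMatrixUnits.of_partialIsometries he (fun j => hle j (Finset.mem_univ j)) hwf
      (fun j => (hf j).2.1.1) horth, fun i j => ?_⟩
  have hv : ∀ j, N (q j₀ j - e * w j) ≤ N (q j₀ j₀ - e) + β := fun j => by
    have := hN.mul_sub_mul_le (q j₀ j₀) (q j₀ j) e (w j)
    rw [hqq] at this
    linarith [hqw j]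
  have hβ₀ : 0 ≤ β := (hN.nonneg _).trans (hqw j₀)
  rw [Finset.card_univ] at hqe
  calc N (q i j - star (e * w i) * (e * w j))
      ≤ N (q j₀ i - e * w i) + N (q j₀ j - e * w j) :=
        hq.rank_sub_star_mul_le hN hstarN j₀ (fun k => e * w k) i j
    _ ≤ 2 * (2 ^ Fintype.card ι * (N (q j₀ j₀ - f j₀) + 4 * β)) := by linarith [hv i, hv j]
    _ ≤ 2 * (2 ^ Fintype.card ι * (7 ^ Fintype.card ι * ε + 4 * β)) := by gcongr; exact (hf j₀).2.2
    _ = starMatrixUnitConstant (Fintype.card ι) * ε := by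
      rw [starMatrixUnitConstant, hβ]; ring

end MatrixUnits

/-- **Lemma 4.8** (Ara–Claramunt). For every positive integer `p` there is a constant `K*(p)`,
depending only on `p`, with the `*`-matrix-unit approximation property. -/
theorem statement12 (p : ℕ) (hp : 0 < p) :
    ∃ c : ℝ, 0 < c ∧ StarMatrixUnitApproxProperty c p := by
  refine ⟨starMatrixUnitConstant p + 1, by rw [starMatrixUnitConstant]; positivity, ?_⟩
  intro F _ _ B _ _ _ _ N A hN hstarN hreg hproper ε hε ρ happrox
  obtain ⟨u, huA, hu, hqu⟩ := IsStarRegular.exists_starMatrixUnits_near ⟨hreg, hproper⟩ hN hstarN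
    (⟨0, hp⟩ : Fin p) ((IsStarMatrixUnits.single F).map ρ)
    fun i j => (happrox i j).imp fun _ ha => ⟨ha.1, ha.2.le⟩
  refine ⟨(hu.restrict huA).toNonUnitalStarAlgHom, fun i j => ?_⟩
  rw [IsStarMatrixUnits.toNonUnitalStarAlgHom_single]
  have h := hqu i j
  rw [Fintype.card_fin] at h
  linarith

end AraClaramunt
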